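/- arXiv:2108.03630 — 6 statements merged into one kernel-verified Lean document; each statement's English description precedes it below -/
import Mathlib

section
/- Let r be a rational function of degree N. For α ∈ Ω(r) (the set of α for which r(z) = α has N pairwise distinct roots), define the generalized backward-shift operator (R^{(r)}_α f)(z) = f(z)/(r(z) − α) − Σ_{n=1}^N f(w_n)/(r′(w_n)(z − w_n)), where w_1, …, w_N are the roots of r(z) = α. Then for α, β ∈ Ω(r) with α ≠ β, the resolvent identity R^{(r)}_α − R^{(r)}_β = (α − β) R^{(r)}_α R^{(r)}_β holds on functions analytic in a neighborhood of r⁻¹{α} ∪ r⁻¹{β}. -/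
/-!
Write `P_γ = p - γ q`, so that `r - γ = P_γ / q` away from the poles. The `N` distinct roots `uₙ`
of `r = α` force `P_α = c ∏ₙ (X - uₙ)`, hence `r'(uₙ) = P_α'(uₙ) / q(uₙ)` is `c / q(uₙ)` times the
inverse Lagrange weight of `uₙ`. For a root `w` of `r = β`, the polynomial `P_β / (X - w)` has
degree `< N`, so the barycentric form of Lagrange interpolation at the `uₙ` gives
`(r(z) - β) / ((r(z) - α)(z - w)) = (α - β) ∑ₙ 1 / (r'(uₙ)(uₙ - w)(z - uₙ))`.
The sum in `R_β f` is a combination of the `1 / (z - w)` over the roots `w` of `r = β`, and in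
`R_α (R_β f)` the point `uₙ` enters through `r(uₙ) = α`; with these two facts the resolvent
identity is field arithmetic.
-/

open Polynomial

noncomputable section

/-- The rational function `r = p/q`, evaluated pointwise. -/
def ratEval (p q : Polynomial ℂ) (z : ℂ) : ℂ := p.eval z / q.eval z

/-- The generalized backward-shift operator
`(R^{(r)}_α f)(z) = f(z)/(r(z) − α) − Σₙ f(wₙ)/(r′(wₙ)(z − wₙ))`,
where `w 0, …, w (N-1)` are the roots of `r(z) = α`. -/
def Rop (p q : Polynomial ℂ) (α : ℂ) {N : ℕ} (w : Fin N → ℂ) (f : ℂ → ℂ) : ℂ → ℂ :=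
  fun z => f z / (ratEval p q z - α)
    - ∑ n : Fin N, f (w n) / (deriv (ratEval p q) (w n) * (z - w n))

open Finset Lagrange

namespace Lagrange

variable {F ι : Type*} [Field F] {s : Finset ι} {v : ι → F}

theorem nodal_dvd_of_eval_eq_zero (hvs : Set.InjOn v s) {P : F[X]}
    (hP : ∀ i ∈ s, P.eval (v i) = 0) : nodal s v ∣ P :=
  Finset.prod_dvd_of_coprime
    (fun _ hi _ hj hij => isCoprime_X_sub_C_of_isUnit_sub (sub_ne_zero.2 (hvs.ne hi hj hij)).isUnit)
    fun i hi => dvd_iff_isRoot.2 (hP i hi)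

theorem eq_C_leadingCoeff_mul_nodal (hvs : Set.InjOn v s) {P : F[X]} (hdeg : P.natDegree ≤ #s)
    (hP : ∀ i ∈ s, P.eval (v i) = 0) : P = C P.leadingCoeff * nodal s v :=
  eq_leadingCoeff_mul_of_monic_of_dvd_of_natDegree_le nodal_monic
    (nodal_dvd_of_eval_eq_zero hvs hP) (by rwa [natDegree_nodal])

theorem eval_eq_eval_nodal_mul_sum_nodalWeight [DecidableEq ι] (hvs : Set.InjOn v s) {P : F[X]}
    (hdeg : P.degree < #s) {x : F} (hx : ∀ i ∈ s, x ≠ v i) :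
    P.eval x = (nodal s v).eval x * ∑ i ∈ s, nodalWeight s v i * (x - v i)⁻¹ * P.eval (v i) := by
  conv_lhs => rw [eq_interpolate hvs hdeg]
  exact eval_interpolate_not_at_node _ hx

end Lagrange

theorem Polynomial.degree_divByMonic_X_sub_C_lt {R : Type*} [CommRing R] [Nontrivial R]
    {P : R[X]} {n : ℕ} (hP : P.natDegree ≤ n) (w : R) : (P /ₘ (X - C w)).degree < n := by
  rcases eq_or_ne P 0 with rfl | h
  · simp
  · refine (degree_divByMonic_lt _ _ h (by simp)).trans_le ?_
    exact degree_le_natDegree.trans (by exact_mod_cast hP)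

section RationalFunction

variable {p q : ℂ[X]}

theorem natDegree_sub_C_mul_le (hdeg : q.natDegree ≤ p.natDegree) (a : ℂ) :
    (p - C a * q).natDegree ≤ p.natDegree :=
  (natDegree_sub_le _ _).trans (max_le le_rfl ((natDegree_C_mul_le _ _).trans hdeg))

theorem ratEval_sub {z : ℂ} (hq : q.eval z ≠ 0) (a : ℂ) :
    ratEval p q z - a = (p - C a * q).eval z / q.eval z := by
  rw [ratEval, eval_sub, eval_mul, eval_C]
  field_simp

theorem ratEval_eq_of_eval_eq {a w : ℂ} (hq : q.eval w ≠ 0) (hw : p.eval w = a * q.eval w) :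
    ratEval p q w = a := by
  rw [ratEval, hw, mul_div_cancel_right₀ _ hq]

theorem deriv_ratEval_eq_of_eval_eq {a w : ℂ} (hq : q.eval w ≠ 0) (hw : p.eval w = a * q.eval w) :
    deriv (ratEval p q) w = (p - C a * q).derivative.eval w / q.eval w := by
  have h : HasDerivAt (ratEval p q) _ w := (p.hasDerivAt w).div (q.hasDerivAt w) hq
  rw [h.deriv, hw]
  simp only [derivative_sub, derivative_mul, derivative_C, zero_mul, zero_add, eval_sub,
    eval_mul, eval_C]
  field_simp

theorem deriv_ratEval_eq_of_eq_C_mul_nodal {N : ℕ} {u : Fin N → ℂ} {a c : ℂ}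
    (hqu : ∀ n, q.eval (u n) ≠ 0) (hru : ∀ n, p.eval (u n) = a * q.eval (u n))
    (hP : p - C a * q = C c * nodal univ u) (n : Fin N) :
    deriv (ratEval p q) (u n) = c * (nodalWeight univ u n)⁻¹ / q.eval (u n) := by
  rw [deriv_ratEval_eq_of_eval_eq (hqu n) (hru n), hP, derivative_C_mul, eval_mul, eval_C,
    nodalWeight_eq_eval_derivative_nodal (mem_univ n), inv_inv]

theorem ratEval_sub_div_eq_sum {N : ℕ} {u : Fin N → ℂ} (hu : Function.Injective u) {α β w z : ℂ}
    (hαβ : α ≠ β) (hα : (p - C α * q).natDegree ≤ N) (hβ : (p - C β * q).natDegree ≤ N)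
    (hqu : ∀ n, q.eval (u n) ≠ 0) (hru : ∀ n, p.eval (u n) = α * q.eval (u n))
    (hqw : q.eval w ≠ 0) (hrw : p.eval w = β * q.eval w)
    (hqz : q.eval z ≠ 0) (hzα : ratEval p q z ≠ α) (hzw : z ≠ w) :
    (ratEval p q z - β) / (ratEval p q z - α) / (z - w)
      = (α - β) * ∑ n, (u n - w)⁻¹ / (deriv (ratEval p q) (u n) * (z - u n)) := by
  set c := (p - C α * q).leadingCoeff
  have hPα : p - C α * q = C c * nodal univ u :=
    eq_C_leadingCoeff_mul_nodal hu.injOn (by simpa using hα) fun n _ => by simp [hru n]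
  have hPαz : (p - C α * q).eval z ≠ 0 := by
    have h := sub_ne_zero.2 hzα
    rw [ratEval_sub hqz] at h
    exact (div_ne_zero_iff.1 h).1
  rw [hPα, eval_mul, eval_C] at hPαz
  obtain ⟨hc, hnz⟩ := mul_ne_zero_iff.1 hPαz
  have hzu : ∀ n, z ≠ u n := fun n h => hnz (h ▸ eval_nodal_at_node (mem_univ n))
  have huw : ∀ n, u n ≠ w := fun n h =>
    hαβ (by rw [← ratEval_eq_of_eval_eq (hqu n) (hru n), h, ratEval_eq_of_eval_eq hqw hrw])
  set S := (p - C β * q) /ₘ (X - C w)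
  have hS : (X - C w) * S = p - C β * q := mul_divByMonic_eq_iff_isRoot.2 (by simp [IsRoot, hrw])
  have hSu : ∀ n, S.eval (u n) = (α - β) * q.eval (u n) / (u n - w) := fun n => by
    have h := congrArg (eval (u n)) hS
    simp only [eval_mul, eval_sub, eval_X, eval_C, hru n] at h
    rw [eq_div_iff (sub_ne_zero.2 (huw n))]
    linear_combination h
  calc (ratEval p q z - β) / (ratEval p q z - α) / (z - w)
      = S.eval z / (c * (nodal univ u).eval z) := by
        rw [ratEval_sub hqz, ratEval_sub hqz, hPα, ← hS]
        simp only [eval_mul, eval_sub, eval_X, eval_C]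
        field_simp
    _ = c⁻¹ * ∑ n, nodalWeight univ u n * (z - u n)⁻¹ * S.eval (u n) := by
        rw [eval_eq_eval_nodal_mul_sum_nodalWeight hu.injOn (s := univ)
          (by simpa [S] using degree_divByMonic_X_sub_C_lt hβ w) fun n _ => hzu n]
        field_simp
    _ = (α - β) * ∑ n, (u n - w)⁻¹ / (deriv (ratEval p q) (u n) * (z - u n)) := by
        rw [mul_sum, mul_sum]
        refine sum_congr rfl fun n _ => ?_
        rw [hSu n, deriv_ratEval_eq_of_eq_C_mul_nodal hqu hru hPα n]
        have := nodalWeight_ne_zero hu.injOn (mem_univ n)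
        have := hqu n
        have := sub_ne_zero.2 (hzu n)
        have := sub_ne_zero.2 (huw n)
        field_simp

theorem ratEval_sub_div_mul_sum_eq_sum {N : ℕ} {u : Fin N → ℂ} (hu : Function.Injective u)
    {α β z : ℂ} (hαβ : α ≠ β) (hα : (p - C α * q).natDegree ≤ N)
    (hβ : (p - C β * q).natDegree ≤ N)
    (hqu : ∀ n, q.eval (u n) ≠ 0) (hru : ∀ n, p.eval (u n) = α * q.eval (u n))
    {ι : Type*} (t : Finset ι) (w c : ι → ℂ)
    (hqw : ∀ m ∈ t, q.eval (w m) ≠ 0) (hrw : ∀ m ∈ t, p.eval (w m) = β * q.eval (w m))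
    (hqz : q.eval z ≠ 0) (hzα : ratEval p q z ≠ α) (hzw : ∀ m ∈ t, z ≠ w m) :
    (ratEval p q z - β) / (ratEval p q z - α) * ∑ m ∈ t, c m / (z - w m)
      = (α - β) * ∑ n, (∑ m ∈ t, c m / (u n - w m))
          / (deriv (ratEval p q) (u n) * (z - u n)) := by
  calc (ratEval p q z - β) / (ratEval p q z - α) * ∑ m ∈ t, c m / (z - w m)
      = ∑ m ∈ t, c m * ((ratEval p q z - β) / (ratEval p q z - α) / (z - w m)) := by
        rw [mul_sum]
        exact sum_congr rfl fun m _ => by ring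
    _ = ∑ m ∈ t, c m * ((α - β) *
          ∑ n, (u n - w m)⁻¹ / (deriv (ratEval p q) (u n) * (z - u n))) :=
        sum_congr rfl fun m hm => by
          rw [ratEval_sub_div_eq_sum hu hαβ hα hβ hqu hru (hqw m hm) (hrw m hm) hqz hzα (hzw m hm)]
    _ = _ := by
        simp only [mul_sum, sum_div]
        rw [sum_comm]
        exact sum_congr rfl fun n _ => sum_congr rfl fun m _ => by ring

end RationalFunction

theorem stmt2_general (p q : Polynomial ℂ) (N : ℕ)
    (hN : p.natDegree = N) (hdeg : q.natDegree ≤ p.natDegree)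
    (α β : ℂ) (hαβ : α ≠ β)
    (u : Fin N → ℂ) (hu : Function.Injective u)
    (hru : ∀ n, p.eval (u n) = α * q.eval (u n)) (hqu : ∀ n, q.eval (u n) ≠ 0)
    (v : Fin N → ℂ)
    (hrv : ∀ n, p.eval (v n) = β * q.eval (v n)) (hqv : ∀ n, q.eval (v n) ≠ 0)
    (f : ℂ → ℂ) :
    ∀ z : ℂ, q.eval z ≠ 0 → ratEval p q z ≠ α → ratEval p q z ≠ β →
      Rop p q α u f z - Rop p q β v f z
        = (α - β) * Rop p q α u (Rop p q β v f) z := by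
  intro z hqz hzα hzβ
  have hzv : ∀ m, z ≠ v m := fun m h => hzβ (h ▸ ratEval_eq_of_eval_eq (hqv m) (hrv m))
  have key := ratEval_sub_div_mul_sum_eq_sum hu hαβ (hN ▸ natDegree_sub_C_mul_le hdeg α)
    (hN ▸ natDegree_sub_C_mul_le hdeg β) hqu hru univ v
    (fun m => f (v m) / deriv (ratEval p q) (v m)) (fun m _ => hqv m) (fun m _ => hrv m) hqz hzα
    (fun m _ => hzv m)
  simp only [div_div] at key
  set A := ∑ n, f (u n) / (deriv (ratEval p q) (u n) * (z - u n))
  set T := ∑ n, (∑ m, f (v m) / (deriv (ratEval p q) (v m) * (u n - v m)))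
    / (deriv (ratEval p q) (u n) * (z - u n))
  have hsplit : ∑ n, (f (u n) / (α - β) - ∑ m, f (v m) / (deriv (ratEval p q) (v m) * (u n - v m)))
      / (deriv (ratEval p q) (u n) * (z - u n)) = A / (α - β) - T := by
    rw [sum_div, ← sum_sub_distrib]
    exact sum_congr rfl fun n _ => by ring
  simp only [Rop, ratEval_eq_of_eval_eq (hqu _) (hru _)]
  rw [hsplit]
  have hA := sub_ne_zero.2 hzα
  have hB := sub_ne_zero.2 hzβ
  have hab := sub_ne_zero.2 hαβ
  field_simp at key ⊢
  linear_combination (ratEval p q z - β) * key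

/-- the resolvent identity
`R^{(r)}_α − R^{(r)}_β = (α − β) R^{(r)}_α R^{(r)}_β` for `α, β ∈ Ω(r)`, `α ≠ β`,
on functions analytic in a neighborhood of `r⁻¹{α} ∪ r⁻¹{β}`. -/
theorem stmt2 (p q : Polynomial ℂ) (hco : IsCoprime p q) (N : ℕ)
    (hN : p.natDegree = N) (hdeg : q.natDegree ≤ p.natDegree)
    (α β : ℂ) (hαβ : α ≠ β)
    (u : Fin N → ℂ) (hu : Function.Injective u)
    (hru : ∀ n, p.eval (u n) = α * q.eval (u n)) (hqu : ∀ n, q.eval (u n) ≠ 0)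
    (v : Fin N → ℂ) (hv : Function.Injective v)
    (hrv : ∀ n, p.eval (v n) = β * q.eval (v n)) (hqv : ∀ n, q.eval (v n) ≠ 0)
    (f : ℂ → ℂ) (hf : ∀ n, AnalyticAt ℂ f (u n) ∧ AnalyticAt ℂ f (v n)) :
    ∀ z : ℂ, q.eval z ≠ 0 → ratEval p q z ≠ α → ratEval p q z ≠ β →
      Rop p q α u f z - Rop p q β v f z
        = (α - β) * Rop p q α u (Rop p q β v f) z :=
  stmt2_general p q N hN hdeg α β hαβ u hu hru hqu v hrv hqv f

end
end

section
/- Let r be a rational function of degree N, α ∈ Ω(r), and let w_1, …, w_N be the N distinct roots of r(z) = α. Then the N × N matrix G with entries g_{nj} = e_n(w_j), where e_1, …, e_N is a basis of the state space 𝔏(r), is invertible. -/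
/-!
If the determinant vanished, some `d ≠ 0` would satisfy `∑ⱼ dⱼ f(wⱼ) = 0` for every `f ∈ 𝔏(r)`.
Since `r(wⱼ) = α`, the difference quotient at `a` takes the value `(α − r(a))/(wⱼ − a)` at `wⱼ`,
so `∑ⱼ dⱼ/(wⱼ − a) = 0` for all but finitely many `a` (coprimality keeps `r` from being the
constant `α`). Clearing denominators, the polynomial `∑ⱼ dⱼ ∏_{k≠j} (X − wₖ)` has infinitely many
roots, hence vanishes, and evaluating it at `wᵢ` gives `dᵢ = 0`.
-/

open Polynomial

noncomputable section

/-- The difference quotient `z ↦ (r(z) − r(a))/(z − a)` (equal to `r′(a)` at `z = a`). -/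
def dq (p q : Polynomial ℂ) (a : ℂ) : ℂ → ℂ :=
  fun z => if z = a then deriv (ratEval p q) a
           else (ratEval p q z - ratEval p q a) / (z - a)

/-- The state space `𝔏(r)`: the span of the difference quotients of `r = p/q`. -/
def stateSpace (p q : Polynomial ℂ) : Submodule ℂ (ℂ → ℂ) :=
  Submodule.span ℂ {f | ∃ a : ℂ, q.eval a ≠ 0 ∧ f = dq p q a}

open Filter Finset Function Matrix

theorem eq_zero_of_eventually_sum_div_sub_eq_zero {K ι : Type*} [Field K] [Infinite K]
    [Fintype ι] [DecidableEq ι] {w : ι → K} (hw : Injective w) {d : ι → K}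
    (h : ∀ᶠ a in cofinite, ∑ j, d j / (w j - a) = 0) : d = 0 := by
  set F : K[X] := ∑ j, C (d j) * Lagrange.nodal (univ.erase j) w
  have hF_eval (a : K) (ha : a ∉ Set.range w) :
      F.eval a = -(∏ k, (a - w k)) * ∑ j, d j / (w j - a) := by
    simp only [F, eval_finsetSum, eval_mul, eval_C, Lagrange.eval_nodal, mul_sum]
    refine sum_congr rfl fun j _ => ?_
    have hj : w j - a ≠ 0 := sub_ne_zero.mpr fun h => ha ⟨j, h⟩
    rw [← mul_prod_erase univ (fun k => a - w k) (mem_univ j)]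
    field_simp
    ring
  have hF : F = 0 := by
    refine eq_zero_of_infinite_isRoot F (frequently_cofinite_iff_infinite.mp ?_)
    refine (h.and (Set.finite_range w).eventually_cofinite_notMem).frequently.mono ?_
    rintro a ⟨ha, haw⟩
    simp [IsRoot, hF_eval a haw, ha]
  funext i
  have hi := congrArg (Polynomial.eval (w i)) hF
  rw [eval_finsetSum, sum_eq_single i] at hi
  · rw [eval_mul, eval_C, eval_zero] at hi
    refine (mul_eq_zero.mp hi).resolve_right (Lagrange.eval_nodal_not_at_node fun k hk => ?_)
    exact hw.ne (mem_erase.mp hk).1.symm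
  · intro j _ hji
    rw [eval_mul, Lagrange.eval_nodal_at_node (mem_erase.mpr ⟨Ne.symm hji, mem_univ i⟩), mul_zero]
  · simp

theorem sum_apply_mul_eq_zero_of_mem_span {ι κ X R : Type*} [Fintype κ] [CommSemiring R]
    {e : ι → X → R} {w : κ → X} {d : κ → R} (hd : (Matrix.of fun n j => e n (w j)) *ᵥ d = 0)
    {f : X → R} (hf : f ∈ Submodule.span R (Set.range e)) : ∑ j, f (w j) * d j = 0 := by
  induction hf using Submodule.span_induction with
  | mem f hf => obtain ⟨n, rfl⟩ := hf; exact congrFun hd n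
  | zero => simp
  | add f g _ _ hf hg => simp [add_mul, sum_add_distrib, hf, hg]
  | smul c f _ hf => simp [mul_assoc, ← mul_sum, hf]

theorem sub_C_mul_ne_zero_of_isCoprime {R : Type*} [CommRing R] [IsDomain R] {p q : R[X]}
    (hco : IsCoprime p q) (hp : 0 < p.natDegree) (α : R) : p - C α * q ≠ 0 := by
  intro h
  have hq : IsUnit q := hco.isUnit_of_dvd' ⟨C α, by rw [sub_eq_zero.mp h, mul_comm]⟩ dvd_rfl
  have : p.natDegree ≤ 0 := by
    rw [sub_eq_zero.mp h]
    exact (natDegree_C_mul_le α q).trans (natDegree_eq_zero_of_isUnit hq).le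
  omega

theorem dq_apply_of_eval_eq {p q : ℂ[X]} {α a z : ℂ} (hq : q.eval z ≠ 0)
    (h : p.eval z = α * q.eval z) (hz : z ≠ a) :
    dq p q a z = (α - ratEval p q a) / (z - a) := by
  rw [dq, if_neg hz, ratEval, h, mul_div_cancel_right₀ α hq]

theorem ratEval_ne_of_eval_ne {p q : ℂ[X]} {α a : ℂ} (hq : q.eval a ≠ 0)
    (h : p.eval a ≠ α * q.eval a) : ratEval p q a ≠ α := by
  rwa [ratEval, Ne, div_eq_iff hq]

theorem sum_dq_apply_mul {ι : Type*} [Fintype ι] {p q : ℂ[X]} {α a : ℂ} {w : ι → ℂ}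
    (hq : ∀ j, q.eval (w j) ≠ 0) (hroot : ∀ j, p.eval (w j) = α * q.eval (w j))
    (ha : a ∉ Set.range w) (d : ι → ℂ) :
    ∑ j, dq p q a (w j) * d j = (α - ratEval p q a) * ∑ j, d j / (w j - a) := by
  rw [mul_sum]
  refine sum_congr rfl fun j _ => ?_
  rw [dq_apply_of_eval_eq (hq j) (hroot j) fun h => ha ⟨j, h⟩]
  ring

theorem stmt6_general (p q : Polynomial ℂ) (hco : IsCoprime p q) (N : ℕ)
    (hN : p.natDegree = N) (e : Fin N → (ℂ → ℂ))
    (hspan : Submodule.span ℂ (Set.range e) = stateSpace p q)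
    (α : ℂ) (w : Fin N → ℂ) (hw : Function.Injective w)
    (hroot : ∀ n, p.eval (w n) = α * q.eval (w n)) (hq : ∀ n, q.eval (w n) ≠ 0) :
    (Matrix.of fun n j : Fin N => e n (w j)).det ≠ 0 := by
  rcases N.eq_zero_or_pos with rfl | hNpos
  · simp
  intro hdet
  obtain ⟨d, hd0, hGd⟩ := Matrix.exists_mulVec_eq_zero_iff.mpr hdet
  have hq0 : q ≠ 0 := fun h => hq ⟨0, hNpos⟩ (by simp [h])
  have hpq := sub_C_mul_ne_zero_of_isCoprime hco (hN ▸ hNpos) α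
  refine hd0 (eq_zero_of_eventually_sum_div_sub_eq_zero hw ?_)
  filter_upwards [(finite_setOfPred_isRoot (mul_ne_zero hq0 hpq)).eventually_cofinite_notMem,
    (Set.finite_range w).eventually_cofinite_notMem] with a ha haw
  simp only [IsRoot, eval_mul, eval_sub, eval_C, mul_eq_zero, sub_eq_zero, not_or] at ha
  have hdq : dq p q a ∈ Submodule.span ℂ (Set.range e) :=
    hspan ▸ Submodule.subset_span ⟨a, ha.1, rfl⟩
  have hsum := sum_apply_mul_eq_zero_of_mem_span hGd hdq
  rw [sum_dq_apply_mul hq hroot haw] at hsum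
  exact (mul_eq_zero.mp hsum).resolve_left
    (sub_ne_zero.mpr (ratEval_ne_of_eval_ne ha.1 ha.2).symm)

/-- for `α ∈ Ω(r)` with distinct preimages `w 0, …, w (N-1)` and a
basis `e 0, …, e (N-1)` of `𝔏(r)`, the matrix `(e n (w j))` is invertible. -/
theorem stmt6 (p q : Polynomial ℂ) (hco : IsCoprime p q) (N : ℕ)
    (hN : p.natDegree = N) (hdeg : q.natDegree ≤ p.natDegree)
    (e : Fin N → (ℂ → ℂ)) (hmem : ∀ n, e n ∈ stateSpace p q)
    (hli : LinearIndependent ℂ e)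
    (hspan : Submodule.span ℂ (Set.range e) = stateSpace p q)
    (α : ℂ) (w : Fin N → ℂ) (hw : Function.Injective w)
    (hroot : ∀ n, p.eval (w n) = α * q.eval (w n)) (hq : ∀ n, q.eval (w n) ≠ 0) :
    (Matrix.of fun n j : Fin N => e n (w j)).det ≠ 0 :=
  stmt6_general p q hco N hN e hspan α w hw hroot hq

end
end

section
/- Let r be a rational function of degree N, α ∈ Ω(r) with distinct preimages w_1,…,w_N, and let F_1, …, F_N be functions analytic in a connected open neighborhood Ω of α. If Σ_{n=1}^N e_n(z) F_n(r(z)) ≡ 0 for all z ∈ r⁻¹(Ω), then F_n ≡ 0 on Ω for every n. -/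
/-!
On `{q ≠ 0}` every element of `𝔏(r)` is `u / q` with `deg u < N`, so a basis `eₙ` has numerators
`uₙ`. The difference quotients at the preimages `w_k` of `α` have numerators `(p - α q)/(X - w_k)`,
which are linearly independent (Lagrange), hence so are the `uₙ`. Since `r` is open at each `w_k`,
every `β` near `α` has `N` distinct preimages `z_k`, at which the polynomial `Σₙ Fₙ(β) uₙ` of
degree `< N` vanishes; so it is zero, every `Fₙ(β)` is zero, and the identity theorem concludes.
-/

open Polynomial

noncomputable section

open Topology Filter Set Submodule

section LinearAlgebra

variable {K : Type*} [Field K] {ι : Type*} [Fintype ι]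

theorem LinearIndependent.of_span_le_span {M : Type*} [AddCommGroup M] [Module K M]
    {u v : ι → M} (hv : LinearIndependent K v) (h : span K (range v) ≤ span K (range u)) :
    LinearIndependent K u := by
  have : FiniteDimensional K (span K (range u)) :=
    FiniteDimensional.span_of_finite K (finite_range u)
  rw [linearIndependent_iff_card_eq_finrank_span] at hv ⊢
  have hmono : (range v).finrank K ≤ (range u).finrank K := Submodule.finrank_mono h
  exact le_antisymm (hv ▸ hmono) (finrank_range_le_card u)

namespace Polynomial

theorem linearIndependent_of_eval_eq_zero_of_ne {v : ι → K[X]} {x : ι → K}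
    (hoff : ∀ i j, i ≠ j → (v i).eval (x j) = 0) (hdiag : ∀ i, (v i).eval (x i) ≠ 0) :
    LinearIndependent K v := by
  refine Fintype.linearIndependent_iff.mpr fun c hc i => ?_
  have h := congrArg (eval (x i)) hc
  simp only [eval_finsetSum, eval_smul, smul_eq_mul, eval_zero] at h
  rwa [Finset.sum_eq_single i (fun j _ hji => by rw [hoff j i hji, mul_zero])
    (fun h => absurd (Finset.mem_univ i) h), mul_eq_zero, or_iff_left (hdiag i)] at h

theorem linearIndependent_of_X_sub_C_mul_eq {x : ι → K} (hx : Function.Injective x) {g : K[X]}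
    (hg : g ≠ 0) (hroots : ∀ j, g.eval (x j) = 0) {v : ι → K[X]}
    (hv : ∀ i, (X - C (x i)) * v i = g) (hdeg : ∀ i, (v i).degree < Fintype.card ι) :
    LinearIndependent K v := by
  have hoff : ∀ i j, i ≠ j → (v i).eval (x j) = 0 := fun i j hij => by
    have h := congrArg (eval (x j)) (hv i)
    rw [eval_mul, eval_sub, eval_X, eval_C, hroots j] at h
    exact (mul_eq_zero.mp h).resolve_left (sub_ne_zero.mpr (hx.ne hij.symm))
  refine linearIndependent_of_eval_eq_zero_of_ne hoff fun i hi => hg ?_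
  have : v i = 0 := eq_zero_of_degree_lt_of_eval_index_eq_zero Finset.univ hx.injOn
    (by simpa using hdeg i) fun j _ => (eq_or_ne i j).elim (· ▸ hi) (hoff i j)
  rw [← hv i, this, mul_zero]

theorem eq_zero_of_sum_mul_eval_eq_zero {u : ι → K[X]} (hu : LinearIndependent K u)
    (hdeg : ∀ i, u i ∈ degreeLT K (Fintype.card ι)) {z : ι → K} (hz : Function.Injective z)
    {c : ι → K} (h : ∀ j, ∑ i, c i * (u i).eval (z j) = 0) : c = 0 := by
  have hsum : ∑ i, c i • u i = 0 := by
    refine eq_zero_of_degree_lt_of_eval_index_eq_zero Finset.univ hz.injOn ?_ fun j _ => ?_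
    · rw [Finset.card_univ, ← mem_degreeLT]
      exact sum_mem fun i _ => smul_mem _ _ (hdeg i)
    · simpa [eval_finsetSum] using h j
  ext i
  exact Fintype.linearIndependent_iff.mp hu c hsum i

theorem sub_C_mul_ne_zero {p q : K[X]} (hco : IsCoprime p q) (hp : 0 < p.natDegree) (α : K) :
    p - C α * q ≠ 0 := by
  intro h
  have hpq : p = C α * q := sub_eq_zero.mp h
  have hunit : IsUnit q := hco.isUnit_of_dvd' ⟨C α, by rw [hpq, mul_comm]⟩ dvd_rfl
  refine hp.ne' (Nat.eq_zero_of_le_zero ?_)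
  rw [hpq]
  exact (natDegree_C_mul_le α q).trans (natDegree_eq_zero_of_isUnit hunit).le

end Polynomial

end LinearAlgebra

section RationalFunction

variable {p q : ℂ[X]}

theorem ratEval_eq_of_eval_eq_mul {a α : ℂ} (hq : q.eval a ≠ 0) (h : p.eval a = α * q.eval a) :
    ratEval p q a = α := by
  rw [ratEval, h, mul_div_assoc, div_self hq, mul_one]

theorem X_sub_C_dvd_sub_C_ratEval_mul {a : ℂ} (hq : q.eval a ≠ 0) :
    X - C a ∣ p - C (ratEval p q a) * q := by
  rw [dvd_iff_isRoot, IsRoot, eval_sub, eval_mul, eval_C, ratEval, div_mul_cancel₀ _ hq, sub_self]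

theorem degree_lt_of_X_sub_C_mul_eq (hdeg : q.natDegree ≤ p.natDegree) {a c : ℂ} {u : ℂ[X]}
    (hu : (X - C a) * u = p - C c * q) : u.degree < p.natDegree := by
  have h : ((X - C a) * u).natDegree ≤ p.natDegree := hu ▸
    (natDegree_sub_le _ _).trans (max_le le_rfl ((natDegree_C_mul_le c q).trans hdeg))
  rcases eq_or_ne u 0 with rfl | hu0
  · simp
  rw [natDegree_mul (X_sub_C_ne_zero a) hu0, natDegree_X_sub_C] at h
  rw [degree_eq_natDegree hu0]
  exact_mod_cast (by omega : u.natDegree < p.natDegree)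

/-- Near `a`, `r(z) = r(a) + (z - a) u(z) / q(z)`: this gives `dq` both off `a` and at `a`. -/
theorem dq_eq_div_of_X_sub_C_mul_eq {a : ℂ} {u : ℂ[X]}
    (hu : (X - C a) * u = p - C (ratEval p q a) * q) {z : ℂ} (hz : q.eval z ≠ 0) :
    dq p q a z = u.eval z / q.eval z := by
  have hr : ∀ y, q.eval y ≠ 0 →
      ratEval p q y = ratEval p q a + (y - a) * (u.eval y / q.eval y) := fun y hy => by
    have h := congrArg (eval y) hu
    simp only [eval_mul, eval_sub, eval_X, eval_C] at h
    rw [ratEval, mul_div_assoc', h]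
    field_simp
    ring
  rcases eq_or_ne z a with rfl | hza
  · have hev : ratEval p q =ᶠ[𝓝 z] fun y => ratEval p q z + (y - z) * (u.eval y / q.eval y) :=
      (q.continuous.continuousAt.eventually_ne hz).mono hr
    have hder : HasDerivAt (fun y => ratEval p q z + (y - z) * (u.eval y / q.eval y))
        (1 * (u.eval z / q.eval z) + (z - z) * _) z :=
      (((hasDerivAt_id z).sub_const z).mul
        ((u.hasDerivAt z).div (q.hasDerivAt z) hz)).const_add _
    rw [dq, if_pos rfl, hev.deriv_eq, hder.deriv]
    ring
  · rw [dq, if_neg hza, hr z hz, add_sub_cancel_left, mul_div_cancel_left₀ _ (sub_ne_zero.mpr hza)]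

theorem exists_numerator_dq (hdeg : q.natDegree ≤ p.natDegree) {a : ℂ} (ha : q.eval a ≠ 0) :
    ∃ u ∈ degreeLT ℂ p.natDegree, (X - C a) * u = p - C (ratEval p q a) * q ∧
      ∀ z, q.eval z ≠ 0 → dq p q a z = u.eval z / q.eval z := by
  obtain ⟨u, hu⟩ := X_sub_C_dvd_sub_C_ratEval_mul (p := p) ha
  exact ⟨u, mem_degreeLT.mpr (degree_lt_of_X_sub_C_mul_eq hdeg hu.symm), hu.symm,
    fun z hz => dq_eq_div_of_X_sub_C_mul_eq hu.symm hz⟩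

theorem exists_numerator_of_mem_stateSpace (hdeg : q.natDegree ≤ p.natDegree) {f : ℂ → ℂ}
    (hf : f ∈ stateSpace p q) :
    ∃ u ∈ degreeLT ℂ p.natDegree, ∀ z, q.eval z ≠ 0 → f z = u.eval z / q.eval z := by
  induction hf using Submodule.span_induction with
  | mem f hf =>
    obtain ⟨a, ha, rfl⟩ := hf
    obtain ⟨u, hu, -, hdq⟩ := exists_numerator_dq hdeg ha
    exact ⟨u, hu, hdq⟩
  | zero => exact ⟨0, zero_mem _, fun z _ => by simp⟩
  | add f g _ _ hf hg =>
    obtain ⟨u, hu, hfu⟩ := hf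
    obtain ⟨v, hv, hgv⟩ := hg
    exact ⟨u + v, add_mem hu hv, fun z hz => by simp [hfu z hz, hgv z hz, add_div]⟩
  | smul c f _ hf =>
    obtain ⟨u, hu, hfu⟩ := hf
    exact ⟨c • u, smul_mem _ c hu, fun z hz => by simp [hfu z hz, mul_div_assoc]⟩

theorem numerator_mem_span {ι : Type*} [Fintype ι] (hq : q ≠ 0) {e : ι → ℂ → ℂ} {u : ι → ℂ[X]}
    (hu : ∀ i z, q.eval z ≠ 0 → e i z = (u i).eval z / q.eval z) {f : ℂ → ℂ}
    (hf : f ∈ span ℂ (range e)) {v : ℂ[X]} (hv : ∀ z, q.eval z ≠ 0 → f z = v.eval z / q.eval z) :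
    v ∈ span ℂ (range u) := by
  obtain ⟨d, rfl⟩ := (mem_span_range_iff_exists_fun ℂ).mp hf
  refine (mem_span_range_iff_exists_fun ℂ).mpr ⟨d, eq_of_infinite_eval_eq _ _ ?_⟩
  refine ((q.finite_setOfPred_isRoot hq).infinite_compl).mono fun z hz => ?_
  have h := hv z hz
  simp only [Finset.sum_apply, Pi.smul_apply, smul_eq_mul, hu _ z hz] at h
  rw [mem_ofPred_eq, eval_finsetSum]
  simp only [← mul_div_assoc, ← Finset.sum_div] at h
  simpa using (div_left_inj' hz).mp h

theorem nhds_le_map_ratEval {a : ℂ} (ha : q.eval a ≠ 0) (h : p - C (ratEval p q a) * q ≠ 0) :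
    𝓝 (ratEval p q a) ≤ map (ratEval p q) (𝓝 a) := by
  have hq : ∀ᶠ z in 𝓝 a, q.eval z ≠ 0 := q.continuous.continuousAt.eventually_ne ha
  have hanalytic : AnalyticAt ℂ (ratEval p q) a :=
    DifferentiableOn.analyticAt (s := {z | q.eval z ≠ 0})
      (fun z hz => (p.differentiableAt.div q.differentiableAt hz).differentiableWithinAt) hq
  refine hanalytic.eventually_constant_or_nhds_le_map_nhds.resolve_left fun hconst => ?_
  have hroots : ∀ᶠ z in 𝓝 a, (p - C (ratEval p q a) * q).IsRoot z := by
    filter_upwards [hconst, hq] with z hz hqz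
    rw [ratEval, div_eq_iff hqz] at hz
    simp only [IsRoot, eval_sub, eval_mul, eval_C, hz, sub_self]
  exact (finite_setOfPred_isRoot h).not_infinite (infinite_of_mem_nhds a hroots)

end RationalFunction

theorem eventually_exists_injective_preimage {X Y ι : Type*} [TopologicalSpace X] [T2Space X]
    [TopologicalSpace Y] [Finite ι] {f : X → Y} {s : Set X} {w : ι → X} (hw : Function.Injective w)
    (hs : ∀ i, s ∈ 𝓝 (w i)) {y : Y} (hf : ∀ i, 𝓝 y ≤ map f (𝓝 (w i))) :
    ∀ᶠ b in 𝓝 y, ∃ z : ι → X, Function.Injective z ∧ ∀ i, z i ∈ s ∧ f (z i) = b := by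
  obtain ⟨U, hU, hdisj⟩ := (finite_range w).t2_separation
  have himage : ∀ i, f '' (U (w i) ∩ s) ∈ 𝓝 y := fun i => hf i <| mem_map.mpr <|
    mem_of_superset (inter_mem ((hU _).2.mem_nhds (hU _).1) (hs i)) (subset_preimage_image _ _)
  filter_upwards [iInter_mem.mpr himage] with b hb
  choose z hzU hzb using mem_iInter.mp hb
  refine ⟨z, fun i j hij => by_contra fun hne => ?_, fun i => ⟨(hzU i).2, hzb i⟩⟩
  exact disjoint_left.mp (hdisj (mem_range_self i) (mem_range_self j) (hw.ne hne))
    (hzU i).1 (hij ▸ (hzU j).1)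

theorem stmt7_general (p q : Polynomial ℂ) (hco : IsCoprime p q) (N : ℕ)
    (hN : p.natDegree = N) (hdeg : q.natDegree ≤ p.natDegree)
    (e : Fin N → (ℂ → ℂ)) (hmem : ∀ n, e n ∈ stateSpace p q)
    (hspan : Submodule.span ℂ (Set.range e) = stateSpace p q)
    (α : ℂ) (w : Fin N → ℂ) (hw : Function.Injective w)
    (hroot : ∀ n, p.eval (w n) = α * q.eval (w n)) (hq : ∀ n, q.eval (w n) ≠ 0)
    (Ω : Set ℂ) (hΩ : IsOpen Ω) (hconn : IsConnected Ω) (hα : α ∈ Ω)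
    (F : Fin N → ℂ → ℂ) (hF : ∀ n, AnalyticOnNhd ℂ (F n) Ω)
    (hvan : ∀ z : ℂ, q.eval z ≠ 0 → ratEval p q z ∈ Ω →
      ∑ n : Fin N, e n z * F n (ratEval p q z) = 0) :
    ∀ n, ∀ x ∈ Ω, F n x = 0 := by
  subst hN
  rcases Nat.eq_zero_or_pos p.natDegree with hN0 | hNpos
  · exact fun n => (hN0 ▸ n).elim0
  have hq0 : q ≠ 0 := fun h => hq ⟨0, hNpos⟩ (by simp [h])
  have hg : p - C α * q ≠ 0 := sub_C_mul_ne_zero hco hNpos α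
  have hrw : ∀ k, ratEval p q (w k) = α := fun k => ratEval_eq_of_eval_eq_mul (hq k) (hroot k)
  choose u hudeg hu using fun n => exists_numerator_of_mem_stateSpace hdeg (hmem n)
  choose v hvdeg hvg hv using fun k => exists_numerator_dq hdeg (hq k)
  simp only [hrw] at hvg
  have hu_indep : LinearIndependent ℂ u := by
    refine LinearIndependent.of_span_le_span (v := v) ?_ ?_
    · refine linearIndependent_of_X_sub_C_mul_eq hw hg (fun j => ?_) hvg fun k => ?_
      · simp [hroot j]
      · simpa [← mem_degreeLT] using hvdeg k
    · refine span_le.mpr (range_subset_iff.mpr fun k => numerator_mem_span hq0 hu ?_ (hv k))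
      exact hspan ▸ subset_span ⟨w k, hq k, rfl⟩
  have hpreimages := eventually_exists_injective_preimage hw
    (fun k => q.continuous.continuousAt.eventually_ne (hq k))
    (fun k => hrw k ▸ nhds_le_map_ratEval (hq k) (by rwa [hrw k]))
  have hzero : ∀ᶠ β in 𝓝 α, ∀ n, F n β = 0 := by
    filter_upwards [hΩ.mem_nhds hα, hpreimages] with β hβ ⟨z, hz, hzβ⟩
    refine congrFun (eq_zero_of_sum_mul_eval_eq_zero hu_indep (by simpa using hudeg) hz fun m => ?_)
    obtain ⟨hzq, hrz⟩ := hzβ m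
    have h := hvan (z m) hzq (hrz ▸ hβ)
    rw [hrz] at h
    calc ∑ n, F n β * (u n).eval (z m) = q.eval (z m) * ∑ n, e n (z m) * F n β := by
          simp only [Finset.mul_sum, hu _ _ hzq]
          exact Finset.sum_congr rfl fun n _ => by field_simp
      _ = 0 := by rw [h, mul_zero]
  intro n x hx
  exact (hF n).eqOn_zero_of_preconnected_of_eventuallyEq_zero hconn.isPreconnected hα
    (hzero.mono fun β h => h n) hx

/-- if `F 0, …, F (N-1)` are analytic in a connected open
neighborhood `Ω` of `α ∈ Ω(r)` and `Σₙ eₙ(z) Fₙ(r(z)) ≡ 0` on `r⁻¹(Ω)`, then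
every `Fₙ` vanishes identically on `Ω`. -/
theorem stmt7 (p q : Polynomial ℂ) (hco : IsCoprime p q) (N : ℕ)
    (hN : p.natDegree = N) (hdeg : q.natDegree ≤ p.natDegree)
    (e : Fin N → (ℂ → ℂ)) (hmem : ∀ n, e n ∈ stateSpace p q)
    (hli : LinearIndependent ℂ e)
    (hspan : Submodule.span ℂ (Set.range e) = stateSpace p q)
    (α : ℂ) (w : Fin N → ℂ) (hw : Function.Injective w)
    (hroot : ∀ n, p.eval (w n) = α * q.eval (w n)) (hq : ∀ n, q.eval (w n) ≠ 0)
    (Ω : Set ℂ) (hΩ : IsOpen Ω) (hconn : IsConnected Ω) (hα : α ∈ Ω)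
    (F : Fin N → ℂ → ℂ) (hF : ∀ n, AnalyticOnNhd ℂ (F n) Ω)
    (hvan : ∀ z : ℂ, q.eval z ≠ 0 → ratEval p q z ∈ Ω →
      ∑ n : Fin N, e n z * F n (ratEval p q z) = 0) :
    ∀ n, ∀ x ∈ Ω, F n x = 0 :=
  stmt7_general p q hco N hN hdeg e hmem hspan α w hw hroot hq Ω hΩ hconn hα F hF hvan

end
end

section
/- Let r be a rational function of degree N, α ∈ Ω(r) with distinct preimages w_1, …, w_N, and let F be a ℂ^N-valued function analytic in a neighborhood of α. If f(z) = Z_r(z) F(r(z)), then (R^{(r)}_α f)(z) = Z_r(z) (R_α F)(r(z)), where (R_α F)(λ) = (F(λ) − F(α))/(λ − α) is the classical backward-shift operator. -/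
/-! For `g ∈ 𝔏(r)`, the function `g / (r − α)` is a rational function vanishing at infinity
whose poles are among the simple zeros `w n` of `r − α` (the numerator of `g` has degree `< N`),
so it equals its partial-fraction expansion `∑ n, g (w n) / (r′(w n) (z − w n))`: the operator
`R^{(r)}_α` annihilates `𝔏(r)`. As `R^{(r)}_α` is linear and `f − ∑ n, F n α • e n` vanishes at
every `w n`, applying it to `f` leaves `(f z − ∑ n, F n α * e n z) / (r z − α)`. -/

open Polynomial

noncomputable section

namespace Polynomial

variable {F ι : Type*} [Field F] [Fintype ι]

theorem eq_C_coeff_mul_nodal {s : F[X]} {w : ι → F} (hw : Function.Injective w)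
    (hs : s.natDegree ≤ Fintype.card ι) (hroot : ∀ i, s.IsRoot (w i)) :
    s = C (s.coeff (Fintype.card ι)) * Lagrange.nodal Finset.univ w := by
  have hnodal : (Lagrange.nodal Finset.univ w).natDegree = Fintype.card ι := by
    simp [Lagrange.natDegree_nodal]
  refine eq_of_degree_sub_lt_of_eval_index_eq Finset.univ hw.injOn ?_ ?_
  · rw [degree_lt_iff_coeff_zero]
    intro m hm
    rw [coeff_sub, coeff_C_mul]
    rcases (WithBot.coe_le_coe.mp (by simpa using hm) : Fintype.card ι ≤ m).eq_or_lt with h | h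
    · subst h
      rw [← hnodal, (Lagrange.nodal_monic).coeff_natDegree, hnodal]
      ring
    · rw [coeff_eq_zero_of_natDegree_lt (hs.trans_lt h),
        coeff_eq_zero_of_natDegree_lt (hnodal.trans_lt h)]
      ring
  · intro i _
    simp [(hroot i).eq_zero, Lagrange.eval_nodal_at_node (Finset.mem_univ i)]

theorem eval_div_eval_eq_sum_partialFractions {s u : F[X]} {w : ι → F}
    (hw : Function.Injective w) (hs : s.natDegree ≤ Fintype.card ι) (hroot : ∀ i, s.IsRoot (w i))
    (hu : u.degree < Fintype.card ι) {z : F} (hz : s.eval z ≠ 0) :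
    u.eval z / s.eval z = ∑ i, u.eval (w i) / ((derivative s).eval (w i) * (z - w i)) := by
  classical
  set c := s.coeff (Fintype.card ι)
  have hs_eq : s = C c * Lagrange.nodal Finset.univ w := eq_C_coeff_mul_nodal hw hs hroot
  have hsz : s.eval z = c * (Lagrange.nodal Finset.univ w).eval z := by
    rw [hs_eq, eval_mul, eval_C]
  have hderiv :
      ∀ i, (derivative s).eval (w i) = c * (Lagrange.nodalWeight Finset.univ w i)⁻¹ := by
    intro i
    rw [Lagrange.nodalWeight_eq_eval_derivative_nodal (Finset.mem_univ i), inv_inv, hs_eq,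
      derivative_C_mul, eval_mul, eval_C]
  have hzw : ∀ i, z - w i ≠ 0 := fun i h => hz (by rw [sub_eq_zero.mp h]; exact hroot i)
  have huz : u.eval z = (Lagrange.nodal Finset.univ w).eval z *
      ∑ i, Lagrange.nodalWeight Finset.univ w i * (z - w i)⁻¹ * u.eval (w i) := by
    conv_lhs =>
      rw [Lagrange.eq_interpolate (f := u) (s := Finset.univ) hw.injOn (by simpa using hu)]
    exact Lagrange.eval_interpolate_not_at_node _ fun i _ => sub_ne_zero.mp (hzw i)
  obtain ⟨hc, hnodal⟩ := mul_ne_zero_iff.mp (hsz ▸ hz)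
  rw [huz, hsz, Finset.mul_sum, Finset.sum_div]
  refine Finset.sum_congr rfl fun i _ => ?_
  have := Lagrange.nodalWeight_ne_zero hw.injOn (Finset.mem_univ i)
  have := hzw i
  rw [hderiv]
  field_simp

end Polynomial

section RationalFunction

variable {p q : ℂ[X]}

theorem deriv_ratEval {a : ℂ} (ha : q.eval a ≠ 0) :
    deriv (ratEval p q) a =
      ((derivative p).eval a * q.eval a - p.eval a * (derivative q).eval a) / q.eval a ^ 2 := by
  rw [show ratEval p q = fun z => p.eval z / q.eval z from rfl,
    deriv_fun_div p.differentiableAt q.differentiableAt ha, Polynomial.deriv, Polynomial.deriv]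

theorem ratEval_sub_eq {α z : ℂ} (hz : q.eval z ≠ 0) :
    ratEval p q z - α = (p - C α * q).eval z / q.eval z := by
  rw [ratEval, eval_sub, eval_mul, eval_C]
  field_simp

theorem ratEval_eq_of_eval_eq_s9 {α z : ℂ} (hz : q.eval z ≠ 0) (hpz : p.eval z = α * q.eval z) :
    ratEval p q z = α := by
  rw [ratEval, hpz, mul_div_assoc, div_self hz, mul_one]

theorem deriv_ratEval_of_eval_eq {α z : ℂ} (hz : q.eval z ≠ 0) (hpz : p.eval z = α * q.eval z) :
    deriv (ratEval p q) z = (derivative (p - C α * q)).eval z / q.eval z := by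
  rw [deriv_ratEval hz, div_eq_div_iff (pow_ne_zero 2 hz) hz]
  simp only [derivative_sub, derivative_mul, derivative_C, zero_mul, zero_add, eval_sub,
    eval_mul, eval_C, hpz]
  ring

def dqNum (p q : ℂ[X]) (a : ℂ) : ℂ[X] :=
  (p * C (q.eval a) - C (p.eval a) * q) /ₘ (X - C a)

theorem X_sub_C_mul_dqNum (a : ℂ) :
    (X - C a) * dqNum p q a = p * C (q.eval a) - C (p.eval a) * q := by
  rw [dqNum, mul_divByMonic_eq_iff_isRoot]
  simp [IsRoot, mul_comm]

theorem eval_dqNum_self (a : ℂ) :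
    (dqNum p q a).eval a
      = (derivative p).eval a * q.eval a - p.eval a * (derivative q).eval a := by
  have := congrArg (fun u => (derivative u).eval a) (X_sub_C_mul_dqNum (p := p) (q := q) a)
  simpa using this

theorem dq_eq_eval_dqNum {a z : ℂ} (ha : q.eval a ≠ 0) (hz : q.eval z ≠ 0) :
    dq p q a z = (dqNum p q a).eval z / (q.eval a * q.eval z) := by
  rw [dq]
  split_ifs with h
  · subst h
    rw [deriv_ratEval ha, eval_dqNum_self]
    ring
  · have hv := congrArg (eval z) (X_sub_C_mul_dqNum (p := p) (q := q) a)
    simp only [eval_mul, eval_sub, eval_X, eval_C] at hv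
    rw [ratEval, ratEval, div_sub_div _ _ hz ha, div_div,
      div_eq_div_iff (by have := sub_ne_zero.mpr h; positivity) (mul_ne_zero ha hz)]
    linear_combination (-(q.eval a) * q.eval z) * hv

theorem degree_dqNum_lt {N : ℕ} (hp : p.natDegree ≤ N) (hq : q.natDegree ≤ N) (a : ℂ) :
    (dqNum p q a).degree < N := by
  by_cases h0 : dqNum p q a = 0
  · simp [h0]
  · rw [← natDegree_lt_iff_degree_lt h0]
    have hnum : (p * C (q.eval a) - C (p.eval a) * q).natDegree ≤ N :=
      (natDegree_sub_le _ _).trans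
        (max_le (natDegree_mul_le.trans (by simpa using hp))
          (natDegree_mul_le.trans (by simpa using hq)))
    have := natDegree_mul (X_sub_C_ne_zero a) h0
    rw [X_sub_C_mul_dqNum, natDegree_X_sub_C] at this
    omega

end RationalFunction

section BackwardShift

variable {p q : ℂ[X]} {α : ℂ} {N : ℕ} {w : Fin N → ℂ}

theorem Rop_add (f g : ℂ → ℂ) : Rop p q α w (f + g) = Rop p q α w f + Rop p q α w g := by
  funext z
  simp only [Rop, Pi.add_apply, add_div, Finset.sum_add_distrib]
  ring

theorem Rop_smul (c : ℂ) (f : ℂ → ℂ) : Rop p q α w (c • f) = c • Rop p q α w f := by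
  funext z
  simp only [Rop, Pi.smul_apply, smul_eq_mul, mul_div_assoc, ← Finset.mul_sum, mul_sub]

theorem Rop_sub (f g : ℂ → ℂ) : Rop p q α w (f - g) = Rop p q α w f - Rop p q α w g := by
  funext z
  simp only [Rop, Pi.sub_apply, sub_div, Finset.sum_sub_distrib]
  ring

theorem Rop_of_forall_eq_zero {f : ℂ → ℂ} (hf : ∀ n, f (w n) = 0) (z : ℂ) :
    Rop p q α w f z = f z / (ratEval p q z - α) := by
  simp [Rop, hf]

theorem Rop_eq_zero_of_mem_stateSpace (hw : Function.Injective w)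
    (hp : p.natDegree ≤ N) (hq : q.natDegree ≤ N)
    (hroot : ∀ n, p.eval (w n) = α * q.eval (w n)) (hqw : ∀ n, q.eval (w n) ≠ 0)
    {g : ℂ → ℂ} (hg : g ∈ stateSpace p q) {z : ℂ} (hz : q.eval z ≠ 0)
    (hzα : ratEval p q z ≠ α) : Rop p q α w g z = 0 := by
  induction hg using Submodule.span_induction with
  | mem g hgen =>
    obtain ⟨a, ha, rfl⟩ := hgen
    set s := p - C α * q
    have hs : s.natDegree ≤ N :=
      (natDegree_sub_le _ _).trans (max_le hp (natDegree_mul_le.trans (by simpa using hq)))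
    have hsroot : ∀ n, s.IsRoot (w n) := by simp [s, hroot]
    have hsz : s.eval z ≠ 0 := by
      rw [Ne, ← sub_eq_zero, ratEval_sub_eq hz] at hzα
      exact fun h => hzα (by rw [h, zero_div])
    have hpf := eval_div_eval_eq_sum_partialFractions hw (by simpa using hs) hsroot
      (u := dqNum p q a) (by simpa using degree_dqNum_lt hp hq a) hsz
    have hlhs : (dqNum p q a).eval z / (q.eval a * q.eval z) / (s.eval z / q.eval z)
        = (dqNum p q a).eval z / s.eval z / q.eval a := by
      field_simp
    rw [Rop, sub_eq_zero, dq_eq_eval_dqNum ha hz, ratEval_sub_eq hz, hlhs, hpf, Finset.sum_div]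
    refine Finset.sum_congr rfl fun n _ => ?_
    rw [dq_eq_eval_dqNum ha (hqw n), deriv_ratEval_of_eval_eq (hqw n) (hroot n)]
    have := hqw n
    field_simp
    ring
  | zero => simp [Rop]
  | add f g _ _ hf hg => rw [Rop_add, Pi.add_apply, hf, hg, add_zero]
  | smul c g _ hg => rw [Rop_smul, Pi.smul_apply, hg, smul_zero]

end BackwardShift

theorem stmt9_general (p q : Polynomial ℂ) (N : ℕ)
    (hN : p.natDegree = N) (hdeg : q.natDegree ≤ p.natDegree)
    (e : Fin N → (ℂ → ℂ)) (hmem : ∀ n, e n ∈ stateSpace p q)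
    (α : ℂ) (w : Fin N → ℂ) (hw : Function.Injective w)
    (hroot : ∀ n, p.eval (w n) = α * q.eval (w n)) (hq : ∀ n, q.eval (w n) ≠ 0)
    (F : Fin N → ℂ → ℂ)
    (f : ℂ → ℂ) (hf : ∀ z, f z = ∑ n : Fin N, e n z * F n (ratEval p q z)) :
    ∀ z : ℂ, q.eval z ≠ 0 → ratEval p q z ≠ α →
      Rop p q α w f z
        = ∑ n : Fin N, e n z *
            ((F n (ratEval p q z) - F n α) / (ratEval p q z - α)) := by
  intro z hz hzα
  set g : ℂ → ℂ := ∑ n, F n α • e n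
  have hg : g ∈ stateSpace p q := Submodule.sum_mem _ fun n _ => Submodule.smul_mem _ _ (hmem n)
  have hfg : ∀ m, (f - g) (w m) = 0 := by
    intro m
    simp [g, hf, ratEval_eq_of_eval_eq_s9 (hq m) (hroot m), mul_comm]
  calc Rop p q α w f z = Rop p q α w (f - g) z + Rop p q α w g z := by
        rw [Rop_sub, Pi.sub_apply, sub_add_cancel]
    _ = (f z - g z) / (ratEval p q z - α) := by
        rw [Rop_of_forall_eq_zero hfg, Rop_eq_zero_of_mem_stateSpace hw hN.le (hdeg.trans_eq hN)
          hroot hq hg hz hzα, add_zero, Pi.sub_apply]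
    _ = _ := by
        simp only [g, hf, Finset.sum_apply, Pi.smul_apply, smul_eq_mul, ← Finset.sum_sub_distrib,
          Finset.sum_div, mul_comm (F _ α), ← mul_sub, mul_div_assoc]

/-- if `f(z) = Z_r(z) F(r(z))` with `F` analytic near `α ∈ Ω(r)`,
then `(R^{(r)}_α f)(z) = Z_r(z) (R_α F)(r(z))`, where
`(R_α F)(λ) = (F(λ) − F(α))/(λ − α)` is the classical backward-shift. -/
theorem stmt9 (p q : Polynomial ℂ) (hco : IsCoprime p q) (N : ℕ)
    (hN : p.natDegree = N) (hdeg : q.natDegree ≤ p.natDegree)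
    (e : Fin N → (ℂ → ℂ)) (hmem : ∀ n, e n ∈ stateSpace p q)
    (hli : LinearIndependent ℂ e)
    (hspan : Submodule.span ℂ (Set.range e) = stateSpace p q)
    (α : ℂ) (w : Fin N → ℂ) (hw : Function.Injective w)
    (hroot : ∀ n, p.eval (w n) = α * q.eval (w n)) (hq : ∀ n, q.eval (w n) ≠ 0)
    (F : Fin N → ℂ → ℂ) (hF : ∀ n, AnalyticAt ℂ (F n) α)
    (f : ℂ → ℂ) (hf : ∀ z, f z = ∑ n : Fin N, e n z * F n (ratEval p q z)) :
    ∀ z : ℂ, q.eval z ≠ 0 → ratEval p q z ≠ α →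
      Rop p q α w f z
        = ∑ n : Fin N, e n z *
            ((F n (ratEval p q z) - F n α) / (ratEval p q z - α)) :=
  stmt9_general p q N hN hdeg e hmem α w hw hroot hq F f hf

end
end

section
/- Let r(z) = z + 1/z, let α ∈ ℂ \ {2, −2, 0}, and let α₊, α₋ be the two roots of z + 1/z = α. With Z_r(z) = (1, 1/z), the 2×2 matrix X = Z_r(α₊)ᵗ Z_r(α₊)/r′(α₊) + Z_r(α₋)ᵗ Z_r(α₋)/r′(α₋) equals diag(1, −1), independently of α. -/
/-! The roots of `z + 1/z = α` are `a` and `a⁻¹`, with `a² ≠ 1` because `α ≠ ±2`. The two rank-one terms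
are then `[a², a; a, 1]/(a² - 1)` and `[1, a; a, a²]/(1 - a²)`, whose sum is `diag(1, -1)`. -/

variable {K : Type*} [Field K]

/-- `Z_r(z)ᵗ Z_r(z) / r′(z)` for `r(z) = z + 1/z`. -/
def residueTerm (z : K) : Matrix (Fin 2) (Fin 2) K :=
  Matrix.of fun i j => ![1, z⁻¹] i * ![1, z⁻¹] j / (1 - z⁻¹ ^ 2)

theorem residueTerm_add_residueTerm_inv {z : K} (hz : z ≠ 0) (hz2 : z ^ 2 ≠ 1) :
    residueTerm z + residueTerm z⁻¹ = !![1, 0; 0, -1] := by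
  ext i j
  fin_cases i <;> fin_cases j <;>
    simp only [residueTerm, Matrix.add_apply, Matrix.of_apply, Fin.zero_eta, Fin.mk_one, Fin.isValue,
      Matrix.cons_val_zero, Matrix.cons_val_one, inv_inv] <;>
    field_simp <;> ring

theorem mul_eq_one_of_add_inv_eq_add_inv {a b : K} (ha : a ≠ 0) (hb : b ≠ 0) (hab : a ≠ b)
    (h : a + a⁻¹ = b + b⁻¹) : a * b = 1 := by
  have hfactor : (a - b) * (a * b - 1) = 0 := by
    field_simp at h
    linear_combination h
  exact sub_eq_zero.mp ((mul_eq_zero.mp hfactor).resolve_left (sub_ne_zero.mpr hab))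

theorem sq_ne_one_of_add_inv_ne_two {a : K} (h2 : a + a⁻¹ ≠ 2) (h2' : a + a⁻¹ ≠ -2) :
    a ^ 2 ≠ 1 := by
  rw [sq_ne_one_iff]
  constructor <;> rintro rfl <;> norm_num at *

theorem stmt11_general (α a b : ℂ) (hα2 : α ≠ 2) (hα2' : α ≠ -2)
    (ha0 : a ≠ 0) (hb0 : b ≠ 0) (hab : a ≠ b)
    (ha : a + a⁻¹ = α) (hb : b + b⁻¹ = α) :
    (Matrix.of fun i j : Fin 2 =>
        ![1, a⁻¹] i * ![1, a⁻¹] j / (1 - (a⁻¹) ^ 2)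
          + ![1, b⁻¹] i * ![1, b⁻¹] j / (1 - (b⁻¹) ^ 2))
      = !![(1 : ℂ), 0; 0, -1] := by
  have hba : b = a⁻¹ :=
    (inv_eq_of_mul_eq_one_right
      (mul_eq_one_of_add_inv_eq_add_inv ha0 hb0 hab (ha.trans hb.symm))).symm
  subst hba
  exact residueTerm_add_residueTerm_inv ha0 (sq_ne_one_of_add_inv_ne_two (ha ▸ hα2) (ha ▸ hα2'))

/-- for `r(z) = z + 1/z` (with `r′(z) = 1 − 1/z²`,
`Z_r(z) = (1, 1/z)`) and `α ∉ {2, −2, 0}` with roots `a, b` of `z + 1/z = α`,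
the matrix `X = Z_r(a)ᵗ Z_r(a)/r′(a) + Z_r(b)ᵗ Z_r(b)/r′(b)` equals
`diag(1, −1)`, independently of `α`. -/
theorem stmt11 (α a b : ℂ) (hα2 : α ≠ 2) (hα2' : α ≠ -2) (hα0 : α ≠ 0)
    (ha0 : a ≠ 0) (hb0 : b ≠ 0) (hab : a ≠ b)
    (ha : a + a⁻¹ = α) (hb : b + b⁻¹ = α) :
    (Matrix.of fun i j : Fin 2 =>
        ![1, a⁻¹] i * ![1, a⁻¹] j / (1 - (a⁻¹) ^ 2)
          + ![1, b⁻¹] i * ![1, b⁻¹] j / (1 - (b⁻¹) ^ 2))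
      = !![(1 : ℂ), 0; 0, -1] :=
  stmt11_general α a b hα2 hα2' ha0 hb0 hab ha hb
end

section
/- Let f be a function analytic on a domain Ω ⊆ ℂ \ {0} that is symmetric under z ↦ 1/z, and suppose f(z) = f(1/z) for all z ∈ Ω. If f admits a representation f(z) = F_1(z + 1/z) + (1/z) F_2(z + 1/z) with F_1, F_2 analytic, then F_2 ≡ 0, i.e. f(z) = F(z + 1/z) for a single analytic function F. -/
open Set

/-! Comparing the representations of `f z` and `f z⁻¹` gives `(z⁻¹ - z) F₂(z + z⁻¹) = 0`, so
`F₂(z + z⁻¹)` vanishes except possibly at the fixed points `z = ±1` of `z ↦ z⁻¹`. Since `Ω` is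
open, `Ω ∖ {±1}` is dense in it, and continuity of `z ↦ F₂(z + z⁻¹)` covers `±1` too. -/

theorem apply_add_inv_eq_zero_of_inv_ne_self {K : Type*} [Field K] {s : Set K}
    (hs : ∀ z ∈ s, z⁻¹ ∈ s) {f F₁ F₂ : K → K} (hsym : ∀ z ∈ s, f z = f z⁻¹)
    (hrep : ∀ z ∈ s, f z = F₁ (z + z⁻¹) + z⁻¹ * F₂ (z + z⁻¹))
    {z : K} (hz : z ∈ s) (hz_inv : z⁻¹ ≠ z) : F₂ (z + z⁻¹) = 0 := by
  have hrep_inv := hrep z⁻¹ (hs z hz)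
  rw [inv_inv, add_comm z⁻¹] at hrep_inv
  have h : (z⁻¹ - z) * F₂ (z + z⁻¹) = 0 := by
    linear_combination hsym z hz - hrep z hz + hrep_inv
  exact (mul_eq_zero.mp h).resolve_left (sub_ne_zero.mpr hz_inv)

theorem stmt17_general (Ω : Set ℂ) (hΩopen : IsOpen Ω)
    (hΩ0 : (0 : ℂ) ∉ Ω) (hΩsym : ∀ z ∈ Ω, z⁻¹ ∈ Ω)
    (f : ℂ → ℂ)
    (hsym : ∀ z ∈ Ω, f z = f z⁻¹)
    (U : Set ℂ) (hUim : ∀ z ∈ Ω, z + z⁻¹ ∈ U)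
    (F₁ F₂ : ℂ → ℂ) (hF₂ : AnalyticOnNhd ℂ F₂ U)
    (hrep : ∀ z ∈ Ω, f z = F₁ (z + z⁻¹) + z⁻¹ * F₂ (z + z⁻¹)) :
    ∀ z ∈ Ω, F₂ (z + z⁻¹) = 0 ∧ f z = F₁ (z + z⁻¹) := by
  have hoff : EqOn (fun z ↦ F₂ (z + z⁻¹)) 0 (Ω ∩ {1, -1}ᶜ) := by
    rintro z ⟨hz, hz_fixed⟩
    refine apply_add_inv_eq_zero_of_inv_ne_self hΩsym hsym hrep hz ?_
    simp only [mem_compl_iff, mem_insert_iff, mem_singleton_iff, not_or] at hz_fixed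
    rw [Ne, inv_eq_self₀]
    rintro (h | h | h)
    exacts [hz_fixed.2 h, hΩ0 (h ▸ hz), hz_fixed.1 h]
  have hcont : ContinuousOn (fun z ↦ F₂ (z + z⁻¹)) Ω := fun z hz ↦ by
    have hz0 : z ≠ 0 := ne_of_mem_of_not_mem hz hΩ0
    exact ((hF₂ _ (hUim z hz)).continuousAt.comp (f := fun w ↦ w + w⁻¹)
      (by fun_prop (disch := exact hz0))).continuousWithinAt
  have hdense : Dense ({1, -1}ᶜ : Set ℂ) := (toFinite _).countable.dense_compl ℂ
  have hzero : EqOn (fun z ↦ F₂ (z + z⁻¹)) 0 Ω :=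
    hoff.of_subset_closure hcont continuousOn_const inter_subset_left
      (hdense.open_subset_closure_inter hΩopen)
  intro z hz
  have hF₂z : F₂ (z + z⁻¹) = 0 := hzero hz
  exact ⟨hF₂z, by rw [hrep z hz, hF₂z, mul_zero, add_zero]⟩

/-- if `f` is analytic on a domain `Ω ⊆ ℂ \ {0}` symmetric under
`z ↦ 1/z`, satisfies `f(z) = f(1/z)`, and admits a representation
`f(z) = F₁(z + 1/z) + (1/z) F₂(z + 1/z)` with `F₁, F₂` analytic, then `F₂ ≡ 0`
(on the image of `Ω` under `z + 1/z`) and `f(z) = F₁(z + 1/z)`. -/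
theorem stmt17 (Ω : Set ℂ) (hΩopen : IsOpen Ω) (hΩconn : IsConnected Ω)
    (hΩ0 : (0 : ℂ) ∉ Ω) (hΩsym : ∀ z ∈ Ω, z⁻¹ ∈ Ω)
    (f : ℂ → ℂ) (hf : AnalyticOnNhd ℂ f Ω)
    (hsym : ∀ z ∈ Ω, f z = f z⁻¹)
    (U : Set ℂ) (hU : IsOpen U) (hUim : ∀ z ∈ Ω, z + z⁻¹ ∈ U)
    (F₁ F₂ : ℂ → ℂ) (hF₁ : AnalyticOnNhd ℂ F₁ U) (hF₂ : AnalyticOnNhd ℂ F₂ U)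
    (hrep : ∀ z ∈ Ω, f z = F₁ (z + z⁻¹) + z⁻¹ * F₂ (z + z⁻¹)) :
    ∀ z ∈ Ω, F₂ (z + z⁻¹) = 0 ∧ f z = F₁ (z + z⁻¹) :=
  stmt17_general Ω hΩopen hΩ0 hΩsym f hsym U hUim F₁ F₂ hF₂ hrep
end
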